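/- arXiv:2308.16084 — 5 statements merged into one kernel-verified Lean document; each statement's English description precedes it below -/
import Mathlib

section
/- Let v be a point in ℝ³ and let L be a line in ℝ³ not passing through v. Then the region Bisect^v(v, L) = {x ∈ ℝ³ : dist(x, v) ≤ dist(x, L)} (points at least as close to v as to the line L) is a convex set. -/
open Metric

abbrev E3 := EuclideanSpace ℝ (Fin 3)

lemma half_convex (v y : E3) : Convex ℝ {x : E3 | dist x v ≤ dist x y} := by
  have hset : {x : E3 | dist x v ≤ dist x y} =
      {x : E3 | (inner ℝ (y - v) x : ℝ) ≤ (‖y‖ ^ 2 - ‖v‖ ^ 2) / 2} := by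
    ext x
    simp only [Set.mem_setOf_eq, dist_eq_norm]
    rw [← Real.sqrt_sq (norm_nonneg (x - v)), ← Real.sqrt_sq (norm_nonneg (x - y)),
      Real.sqrt_le_sqrt_iff (by positivity)]
    rw [norm_sub_sq_real, norm_sub_sq_real, inner_sub_left, real_inner_comm x v, real_inner_comm x y]
    constructor <;> intro h <;> linarith
  rw [hset]
  exact convex_halfSpace_le ((innerSL ℝ (y - v)).toLinearMap.isLinear) _

/-- The region of points at least as close to a point `v` as to a line `L`
(not through `v`) is convex. -/
theorem stmt1 (p d v : E3) (hd : d ≠ (0 : E3))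
    (L : Set E3) (hL : L = {y : E3 | ∃ t : ℝ, y = p + t • d})
    (hvL : v ∉ L) :
    Convex ℝ {x : E3 | dist x v ≤ Metric.infDist x L} := by
  have hne : L.Nonempty := ⟨p, by rw [hL]; exact ⟨0, by simp⟩⟩
  have hset : {x : E3 | dist x v ≤ Metric.infDist x L} =
      ⋂ y ∈ L, {x : E3 | dist x v ≤ dist x y} := by
    ext x
    simp only [Set.mem_setOf_eq, Set.mem_iInter]
    constructor
    · intro h y hy; exact h.trans (infDist_le_dist_of_mem hy)
    · intro h; rw [← not_lt, infDist_lt_iff hne]; push_neg; exact h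
  rw [hset]
  exact convex_iInter fun y => convex_iInter fun _ => half_convex v y
end

section
/- Let C ⊆ ℝ³ be the convex hull of finitely many points x₁, …, x_k, let v ∈ ℝ³ and let L be a line in ℝ³. If for every i, dist(x_i, v) ≤ dist(x_i, L), then for every point x ∈ C, dist(x, v) ≤ dist(x, L). -/
open Metric

open RealInnerProductSpace in
lemma infDist_line {E : Type*} [NormedAddCommGroup E] [InnerProductSpace ℝ E]
    (y p d : E) (hd : d ≠ 0) :
    infDist y {z : E | ∃ t : ℝ, z = p + t • d}
      = dist y (p + ((⟪d, y - p⟫ / ‖d‖ ^ 2) • d)) := by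
  set t0 : ℝ := ⟪d, y - p⟫ / ‖d‖ ^ 2 with ht0
  have hdn : (0:ℝ) < ‖d‖ ^ 2 := by
    have := norm_pos_iff.mpr hd; positivity
  have hmem : (p + t0 • d) ∈ {z : E | ∃ t : ℝ, z = p + t • d} := ⟨t0, rfl⟩
  have hperp : ⟪y - (p + t0 • d), d⟫ = 0 := by
    have h1 : ⟪y - p, d⟫ - t0 * ‖d‖ ^ 2 = 0 := by
      rw [ht0, real_inner_comm]; field_simp; ring
    calc ⟪y - (p + t0 • d), d⟫ = ⟪y - p, d⟫ - t0 * ⟪d, d⟫ := by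
          rw [show y - (p + t0 • d) = (y - p) - t0 • d by abel,
            inner_sub_left, real_inner_smul_left]
      _ = 0 := by rw [real_inner_self_eq_norm_sq]; linarith [h1]
  refine le_antisymm (infDist_le_dist_of_mem hmem) ?_
  haveI : Nonempty {z : E | ∃ t : ℝ, z = p + t • d} := ⟨⟨_, hmem⟩⟩
  rw [infDist_eq_iInf]
  refine le_ciInf fun ⟨w, s, hw⟩ => ?_
  subst hw
  have key : dist y (p + s • d) ^ 2 = dist y (p + t0 • d) ^ 2 + (t0 - s)^2 * ‖d‖^2 := by
    have hdecomp : y - (p + s • d) = (y - (p + t0 • d)) + (t0 - s) • d := by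
      rw [sub_smul]; abel
    rw [dist_eq_norm, dist_eq_norm, hdecomp, norm_add_sq_real, real_inner_smul_right,
      hperp, norm_smul, Real.norm_eq_abs, mul_pow, sq_abs]
    ring
  have h1 : dist y (p + t0 • d) ^ 2 ≤ dist y (p + s • d) ^ 2 := by nlinarith
  exact (pow_le_pow_iff_left₀ dist_nonneg dist_nonneg two_ne_zero).mp h1

open RealInnerProductSpace in
lemma infDist_line_sq {E : Type*} [NormedAddCommGroup E] [InnerProductSpace ℝ E]
    (y p d : E) (hd : d ≠ 0) :
    infDist y {z : E | ∃ t : ℝ, z = p + t • d} ^ 2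
      = ‖y - p‖ ^ 2 - ⟪d, y - p⟫ ^ 2 / ‖d‖ ^ 2 := by
  have hdn : (0:ℝ) < ‖d‖ ^ 2 := by
    have := norm_pos_iff.mpr hd; positivity
  rw [infDist_line y p d hd, dist_eq_norm,
    show y - (p + (⟪d, y - p⟫ / ‖d‖ ^ 2) • d) = (y - p) - (⟪d, y - p⟫ / ‖d‖ ^ 2) • d by abel,
    norm_sub_sq_real, real_inner_smul_right, norm_smul, Real.norm_eq_abs, mul_pow, sq_abs,
    real_inner_comm]
  field_simp
  ring

open RealInnerProductSpace in
lemma g_convex {E : Type*} [NormedAddCommGroup E] [InnerProductSpace ℝ E]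
    (v p d : E) (hd : d ≠ 0) :
    ConvexOn ℝ Set.univ
      (fun w => ‖w - v‖ ^ 2 - ‖w - p‖ ^ 2 + ⟪d, w - p⟫ ^ 2 / ‖d‖ ^ 2) := by
  have hdn : (0:ℝ) < ‖d‖ ^ 2 := by
    have := norm_pos_iff.mpr hd; positivity
  refine ⟨convex_univ, fun x _ y _ a b ha hb hab => ?_⟩
  simp only
  have e1 : ∀ w u : E, ‖w - u‖ ^ 2 = ‖w‖ ^ 2 - 2 * ⟪w, u⟫ + ‖u‖ ^ 2 :=
    fun w u => norm_sub_sq_real w u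
  have hzv : ⟪a • x + b • y, v⟫ = a * ⟪x, v⟫ + b * ⟪y, v⟫ := by
    rw [inner_add_left, real_inner_smul_left, real_inner_smul_left]
  have hzp : ⟪a • x + b • y, p⟫ = a * ⟪x, p⟫ + b * ⟪y, p⟫ := by
    rw [inner_add_left, real_inner_smul_left, real_inner_smul_left]
  have hdz : ⟪d, a • x + b • y - p⟫ = a * ⟪d, x - p⟫ + b * ⟪d, y - p⟫ := by
    have : a • x + b • y - p = a • (x - p) + b • (y - p) := by
      have hp : (a + b) • p = p := by rw [hab, one_smul]
      calc a • x + b • y - p = a • x + b • y - (a + b) • p := by rw [hp]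
        _ = a • (x - p) + b • (y - p) := by rw [add_smul, smul_sub, smul_sub]; abel
    rw [this, inner_add_right, real_inner_smul_right, real_inner_smul_right]
  rw [e1, e1, e1, e1, e1, e1, hzv, hzp, hdz]
  have key : (a * ⟪d, x - p⟫ + b * ⟪d, y - p⟫) ^ 2 / ‖d‖ ^ 2
      ≤ a * (⟪d, x - p⟫ ^ 2 / ‖d‖ ^ 2) + b * (⟪d, y - p⟫ ^ 2 / ‖d‖ ^ 2) := by
    rw [div_le_iff₀ hdn]
    have h2 : (a * (⟪d, x - p⟫ ^ 2 / ‖d‖ ^ 2) + b * (⟪d, y - p⟫ ^ 2 / ‖d‖ ^ 2)) * ‖d‖ ^ 2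
        = a * ⟪d, x - p⟫ ^ 2 + b * ⟪d, y - p⟫ ^ 2 := by
      field_simp
    rw [h2]
    nlinarith [sq_nonneg (⟪d, x - p⟫ - ⟪d, y - p⟫), mul_nonneg ha hb]
  simp only [smul_eq_mul]
  nlinarith [key]

open RealInnerProductSpace in
/-- Convexity-based filtering rule for a line (Theorem 5): if every extreme
point of a polytope is at least as close to `v` as to the line `L`, so is every
point of the polytope. -/
theorem stmt3 (k : ℕ) (x : Fin k → E3) (v p d : E3) (hd : d ≠ (0 : E3))
    (L : Set E3) (hL : L = {y : E3 | ∃ t : ℝ, y = p + t • d})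
    (h : ∀ i, dist (x i) v ≤ Metric.infDist (x i) L) :
    ∀ y ∈ convexHull ℝ (Set.range x), dist y v ≤ Metric.infDist y L := by
  subst hL
  intro y hy
  set L : Set E3 := {y : E3 | ∃ t : ℝ, y = p + t • d} with hLdef
  have hg := g_convex v p d hd
  obtain ⟨z, ⟨i, rfl⟩, hgz⟩ := hg.exists_ge_of_mem_convexHull (Set.subset_univ _) hy
  have hid : ∀ w : E3, ‖w - v‖ ^ 2 - ‖w - p‖ ^ 2 + ⟪d, w - p⟫ ^ 2 / ‖d‖ ^ 2
      = dist w v ^ 2 - infDist w L ^ 2 := by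
    intro w
    rw [infDist_line_sq w p d hd, dist_eq_norm]
    ring
  rw [hid, hid] at hgz
  have hsq : dist (x i) v ^ 2 ≤ infDist (x i) L ^ 2 :=
    pow_le_pow_left₀ dist_nonneg (h i) 2
  have hy2 : dist y v ^ 2 ≤ infDist y L ^ 2 := by linarith
  exact (pow_le_pow_iff_left₀ dist_nonneg (infDist_nonneg) two_ne_zero).mp hy2
end

section
/- Let C ⊆ ℝ³ be the convex hull of finitely many points x₁, …, x_k, let v ∈ ℝ³ and let π be a plane in ℝ³. If for every i, dist(x_i, v) ≤ dist(x_i, π), then for every point x ∈ C, dist(x, v) ≤ dist(x, π). -/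
open Metric
open scoped RealInnerProductSpace

lemma infDist_hyperplane (n : E3) (hn : n ≠ 0) (c : ℝ) (y : E3) :
    Metric.infDist y {z : E3 | ⟪n, z⟫ = c} = |⟪n, y⟫ - c| / ‖n‖ := by
  have hn' : ‖n‖ ≠ 0 := norm_ne_zero_iff.mpr hn
  have hpos : (0:ℝ) < ‖n‖ := lt_of_le_of_ne (norm_nonneg n) (Ne.symm hn')
  have hne : ({z : E3 | ⟪n, z⟫ = c}).Nonempty := by
    refine ⟨(c / ‖n‖ ^ 2) • n, ?_⟩
    simp only [Set.mem_setOf_eq, real_inner_smul_right, real_inner_self_eq_norm_sq]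
    field_simp
  apply le_antisymm
  · set w := y - ((⟪n, y⟫ - c) / ‖n‖ ^ 2) • n with hw
    have hwmem : w ∈ {z : E3 | ⟪n, z⟫ = c} := by
      simp only [hw, Set.mem_setOf_eq, inner_sub_right, real_inner_smul_right,
        real_inner_self_eq_norm_sq]
      field_simp
      ring
    calc Metric.infDist y {z : E3 | ⟪n, z⟫ = c} ≤ dist y w := Metric.infDist_le_dist_of_mem hwmem
      _ = |⟪n, y⟫ - c| / ‖n‖ := by
          rw [dist_eq_norm, hw]
          simp only [sub_sub_cancel, norm_smul, Real.norm_eq_abs, abs_div, abs_pow, abs_norm]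
          field_simp
  · rw [Metric.infDist_eq_iInf]
    have := hne.to_subtype
    apply le_ciInf
    rintro ⟨z, hz⟩
    have hz' : ⟪n, z⟫ = c := hz
    rw [div_le_iff₀ hpos]
    show |⟪n, y⟫ - c| ≤ dist y z * ‖n‖
    calc |⟪n, y⟫ - c| = |⟪n, y - z⟫| := by rw [inner_sub_right, hz']
      _ ≤ ‖n‖ * ‖y - z‖ := abs_real_inner_le_norm n (y - z)
      _ = dist y z * ‖n‖ := by rw [dist_eq_norm]; ring

lemma dist_combo (p q v : E3) {a b : ℝ} (ha : 0 ≤ a) (hb : 0 ≤ b) (hab : a + b = 1) :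
    dist (a • p + b • q) v ≤ a * dist p v + b * dist q v := by
  have hv : a • v + b • v = v := by rw [← add_smul, hab, one_smul]
  calc dist (a • p + b • q) v = ‖a • (p - v) + b • (q - v)‖ := by
        rw [dist_eq_norm, smul_sub, smul_sub]
        congr 1
        rw [show a • p - a • v + (b • q - b • v) = a • p + b • q - (a • v + b • v) by abel, hv]
    _ ≤ ‖a • (p - v)‖ + ‖b • (q - v)‖ := norm_add_le _ _
    _ = a * dist p v + b * dist q v := by
        rw [norm_smul, norm_smul, Real.norm_eq_abs, Real.norm_eq_abs,
          abs_of_nonneg ha, abs_of_nonneg hb, dist_eq_norm, dist_eq_norm]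

lemma inner_combo (n p q : E3) (c : ℝ) {a b : ℝ} (hab : a + b = 1) :
    ⟪n, a • p + b • q⟫ - c = a * (⟪n, p⟫ - c) + b * (⟪n, q⟫ - c) := by
  rw [inner_add_right, real_inner_smul_right, real_inner_smul_right]
  linear_combination c * hab

/-- Convexity-based filtering rule for a plane (Theorem 6). -/
theorem stmt4 (k : ℕ) (x : Fin k → E3) (v n : E3) (c : ℝ) (hn : n ≠ 0)
    (π : Set E3) (hπ : π = {y : E3 | ⟪n, y⟫ = c})
    (h : ∀ i, dist (x i) v ≤ Metric.infDist (x i) π) :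
    ∀ y ∈ convexHull ℝ (Set.range x), dist y v ≤ Metric.infDist y π := by
  subst hπ
  have hn' : (0:ℝ) < ‖n‖ := norm_pos_iff.mpr hn
  simp only [infDist_hyperplane n hn c] at h ⊢
  have h' : ∀ i, dist (x i) v * ‖n‖ ≤ |⟪n, x i⟫ - c| := by
    intro i
    have := h i
    rwa [le_div_iff₀ hn'] at this
  have hCS : ∀ y : E3, |⟪n, y⟫ - c - (⟪n, v⟫ - c)| ≤ dist y v * ‖n‖ := by
    intro y
    have he : ⟪n, y⟫ - c - (⟪n, v⟫ - c) = ⟪n, y - v⟫ := by rw [inner_sub_right]; ring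
    rw [he, dist_eq_norm]
    calc |⟪n, y - v⟫| ≤ ‖n‖ * ‖y - v‖ := abs_real_inner_le_norm n (y - v)
      _ = ‖y - v‖ * ‖n‖ := by ring
  have key : ∀ y ∈ convexHull ℝ (Set.range x), dist y v * ‖n‖ ≤ |⟪n, y⟫ - c| := by
    rcases lt_trichotomy (⟪n, v⟫ - c) 0 with hv | hv | hv
    · -- negative side
      intro y hy
      have hsub : convexHull ℝ (Set.range x) ⊆ {y : E3 | dist y v * ‖n‖ ≤ -(⟪n, y⟫ - c)} := by
        apply convexHull_min
        · rintro _ ⟨i, rfl⟩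
          have hi := h' i
          have hle := hCS (x i)
          have hneg : ⟪n, x i⟫ - c ≤ 0 := by
            by_contra hpos
            push_neg at hpos
            have h3 : |⟪n, x i⟫ - c| = ⟪n, x i⟫ - c := abs_of_pos hpos
            have h4 : ⟪n, x i⟫ - c - (⟪n, v⟫ - c) ≤ |⟪n, x i⟫ - c - (⟪n, v⟫ - c)| := le_abs_self _
            linarith
          show dist (x i) v * ‖n‖ ≤ -(⟪n, x i⟫ - c)
          rw [← abs_of_nonpos hneg]; exact hi
        · rintro p hp q hq a b ha hb hab
          simp only [Set.mem_setOf_eq] at hp hq ⊢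
          have hd := dist_combo p q v ha hb hab
          rw [inner_combo n p q c hab]
          have h1 : a * (dist p v * ‖n‖) ≤ a * (-(⟪n, p⟫ - c)) := by
            exact mul_le_mul_of_nonneg_left hp ha
          have h2 : b * (dist q v * ‖n‖) ≤ b * (-(⟪n, q⟫ - c)) := by
            exact mul_le_mul_of_nonneg_left hq hb
          nlinarith [mul_le_mul_of_nonneg_right hd (le_of_lt hn')]
      have := hsub hy
      calc dist y v * ‖n‖ ≤ -(⟪n, y⟫ - c) := this
        _ ≤ |⟪n, y⟫ - c| := neg_le_abs _
    · -- v on the plane : hull contained in the line through v along n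
      intro y hy
      have hsub : convexHull ℝ (Set.range x) ⊆ {y : E3 | ∃ t : ℝ, y = v + t • n} := by
        apply convexHull_min
        · rintro _ ⟨i, rfl⟩
          rcases eq_or_ne (x i - v) 0 with h0 | h0
          · exact ⟨0, by rw [zero_smul, add_zero, ← sub_eq_zero, h0]⟩
          · have hi := h' i
            have heq : ⟪n, x i⟫ - c = ⟪n, x i - v⟫ := by
              rw [inner_sub_right]; linarith [hv]
            have hle : |⟪n, x i - v⟫| ≤ ‖n‖ * ‖x i - v‖ := abs_real_inner_le_norm _ _
            have hge : ‖n‖ * ‖x i - v‖ ≤ |⟪n, x i - v⟫| := by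
              rw [← heq]
              calc ‖n‖ * ‖x i - v‖ = dist (x i) v * ‖n‖ := by rw [dist_eq_norm]; ring
                _ ≤ |⟪n, x i⟫ - c| := hi
            have heqcs : |⟪n, x i - v⟫| = ‖n‖ * ‖x i - v‖ := le_antisymm hle hge
            have heqcs' : ‖⟪n, x i - v⟫‖ = ‖n‖ * ‖x i - v‖ := by
              rwa [Real.norm_eq_abs]
            obtain ⟨r, _, hr⟩ := (norm_inner_eq_norm_iff hn h0).mp heqcs'
            exact ⟨r, by rw [← hr]; abel⟩
        · rintro p ⟨s, rfl⟩ q ⟨t, rfl⟩ a b ha hb hab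
          refine ⟨a * s + b * t, ?_⟩
          rw [smul_add, smul_add, add_smul, ← smul_smul, ← smul_smul]
          rw [show a • v + a • s • n + (b • v + b • t • n)
              = (a • v + b • v) + (a • s • n + b • t • n) by abel]
          rw [← add_smul, hab, one_smul]
        -- done
      obtain ⟨t, rfl⟩ := hsub hy
      have hd : dist (v + t • n) v = |t| * ‖n‖ := by
        rw [dist_eq_norm, add_sub_cancel_left, norm_smul, Real.norm_eq_abs]
      have hf : ⟪n, v + t • n⟫ - c = t * ‖n‖ ^ 2 := by
        rw [inner_add_right, real_inner_smul_right, real_inner_self_eq_norm_sq]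
        linarith [hv]
      rw [hd, hf, abs_mul, abs_pow, abs_norm]
      ring_nf
      nlinarith [abs_nonneg t, hn']
    · -- positive side
      intro y hy
      have hsub : convexHull ℝ (Set.range x) ⊆ {y : E3 | dist y v * ‖n‖ ≤ ⟪n, y⟫ - c} := by
        apply convexHull_min
        · rintro _ ⟨i, rfl⟩
          have hi := h' i
          have hle := hCS (x i)
          have hneg : 0 ≤ ⟪n, x i⟫ - c := by
            by_contra hpos
            push_neg at hpos
            have h3 : |⟪n, x i⟫ - c| = -(⟪n, x i⟫ - c) := abs_of_neg hpos
            have h4 : -(⟪n, x i⟫ - c - (⟪n, v⟫ - c)) ≤ |⟪n, x i⟫ - c - (⟪n, v⟫ - c)| :=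
              neg_le_abs _
            linarith
          show dist (x i) v * ‖n‖ ≤ ⟪n, x i⟫ - c
          rw [← abs_of_nonneg hneg]; exact hi
        · rintro p hp q hq a b ha hb hab
          simp only [Set.mem_setOf_eq] at hp hq ⊢
          have hd := dist_combo p q v ha hb hab
          rw [inner_combo n p q c hab]
          have h1 : a * (dist p v * ‖n‖) ≤ a * (⟪n, p⟫ - c) :=
            mul_le_mul_of_nonneg_left hp ha
          have h2 : b * (dist q v * ‖n‖) ≤ b * (⟪n, q⟫ - c) :=
            mul_le_mul_of_nonneg_left hq hb
          nlinarith [mul_le_mul_of_nonneg_right hd (le_of_lt hn')]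
      have := hsub hy
      calc dist y v * ‖n‖ ≤ ⟪n, y⟫ - c := this
        _ ≤ |⟪n, y⟫ - c| := le_abs_self _
  intro y hy
  rw [le_div_iff₀ hn']
  exact key y hy
end

section
/- Let f be a nondegenerate closed triangle in ℝ³ with vertices a, b, c, and let f° denote its relative interior (the open triangle). Let Space^⊥(f) be the set of points x ∈ ℝ³ whose orthogonal projection onto the plane of f lies in f°. Then for any point x ∈ ℝ³, if the point of f° closest to x realizes dist(x, f°) and dist(x, f°) < dist(x, ∂f) where ∂f is the boundary of the triangle, then x ∈ Space^⊥(f). Equivalently: if x ∉ Space^⊥(f), then dist(x, closure of f) is attained on the boundary ∂f. -/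
open Metric
open scoped RealInnerProductSpace

lemma triple_mem_hull {a b c : E3} (α β γ : ℝ) (hα : 0 ≤ α) (hβ : 0 ≤ β)
    (hγ : 0 ≤ γ) (hs : α + β + γ = 1) :
    α • a + β • b + γ • c ∈ convexHull ℝ ({a, b, c} : Set E3) := by
  have h := (convex_convexHull ℝ ({a, b, c} : Set E3)).sum_mem
    (t := (Finset.univ : Finset (Fin 3))) (w := ![α, β, γ]) (z := ![a, b, c])
    (by intro i _; fin_cases i <;> simpa)
    (by simp [Fin.sum_univ_three, hs])
    (by intro i _; fin_cases i <;> exact subset_convexHull ℝ _ (by simp))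
  simpa [Fin.sum_univ_three] using h

lemma mem_affineSpan_triple {a b c q : E3}
    (hq : q ∈ (affineSpan ℝ ({a, b, c} : Set E3) : Set E3)) :
    ∃ l m n : ℝ, l + m + n = 1 ∧ q = l • a + m • b + n • c := by
  have ha : a ∈ affineSpan ℝ ({a, b, c} : Set E3) :=
    subset_affineSpan ℝ _ (by simp)
  have hd : q -ᵥ a ∈ (affineSpan ℝ ({a, b, c} : Set E3)).direction :=
    AffineSubspace.vsub_mem_direction hq ha
  rw [direction_affineSpan,
    vectorSpan_eq_span_vsub_set_right ℝ (show a ∈ ({a, b, c} : Set E3) by simp)] at hd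
  have himg : ((· -ᵥ a) '' ({a, b, c} : Set E3)) = {(0 : E3), b - a, c - a} := by
    simp [Set.image_insert_eq, vsub_eq_sub]
  rw [himg, Submodule.span_insert_zero, Submodule.mem_span_pair] at hd
  obtain ⟨s, t, hst⟩ := hd
  refine ⟨1 - s - t, s, t, by ring, ?_⟩
  have h2 : q = a + (s • (b - a) + t • (c - a)) := by
    rw [hst, vsub_eq_sub]; abel
  rw [h2]; module

lemma pos_aux (α m D ε t d : ℝ) (hm : 0 < m) (hmα : m ≤ α) (hd : |d| ≤ D)
    (hε : ε = m / (2 * (D + 1))) (ht : |t| ≤ ε) : 0 < α + t * d := by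
  have hD : 0 ≤ D := le_trans (abs_nonneg d) hd
  have h1 : |t * d| ≤ ε * D := by
    rw [abs_mul]
    exact mul_le_mul ht hd (abs_nonneg d) (by rw [hε]; positivity)
  have h2 : ε * D ≤ m / 2 := by
    rw [hε]
    rw [div_mul_eq_mul_div, div_le_div_iff₀ (by positivity) (by norm_num)]
    nlinarith
  have h3 := neg_abs_le (t * d)
  linarith

/-- Equation (4): a point strictly closer to the open triangle `f°` than to the
triangle's boundary lies in the vertical space `Space⊥(f)`, i.e. its orthogonal
projection onto the plane of the triangle lies in the open triangle. -/
theorem stmt5 (a b c : E3) (hnd : AffineIndependent ℝ ![a, b, c])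
    (f fo bdf : Set E3)
    (hf : f = convexHull ℝ {a, b, c})
    (hfo : fo = {y : E3 | ∃ α β γ : ℝ, 0 < α ∧ 0 < β ∧ 0 < γ ∧
      α + β + γ = 1 ∧ y = α • a + β • b + γ • c})
    (hbd : bdf = f \ fo)
    (x : E3)
    (hx : Metric.infDist x fo < Metric.infDist x bdf) :
    ∃ p ∈ fo, ∀ q ∈ (affineSpan ℝ ({a, b, c} : Set E3) : Set E3),
      ⟪x - p, q - p⟫ = 0 := by
  have habc : ({a, b, c} : Set E3).Finite := by
    exact (Set.finite_singleton c).insert b |>.insert a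
  have hcf : IsCompact f := hf ▸ habc.isCompact_convexHull ℝ
  have hfo_sub : fo ⊆ f := by
    rw [hfo, hf]
    rintro y ⟨α, β, γ, hα, hβ, hγ, hs, rfl⟩
    exact triple_mem_hull α β γ hα.le hβ.le hγ.le hs
  have hfne : f.Nonempty := ⟨a, hf ▸ subset_convexHull ℝ _ (by simp)⟩
  obtain ⟨p, hpf, hpd⟩ := hcf.exists_infDist_eq_dist hfne x
  have hfone : fo.Nonempty := by
    refine ⟨(1/3 : ℝ) • a + (1/3 : ℝ) • b + (1/3 : ℝ) • c, ?_⟩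
    rw [hfo]
    exact ⟨1/3, 1/3, 1/3, by norm_num, by norm_num, by norm_num, by norm_num, rfl⟩
  have hle : infDist x f ≤ infDist x fo := infDist_le_infDist_of_subset hfo_sub hfone
  have hpfo : p ∈ fo := by
    by_contra hp
    have hpb : p ∈ bdf := hbd ▸ ⟨hpf, hp⟩
    have h1 : infDist x bdf ≤ dist x p := infDist_le_dist_of_mem hpb
    rw [← hpd] at h1
    linarith
  refine ⟨p, hpfo, ?_⟩
  intro q hq
  obtain ⟨l, m, n, hlmn, hqe⟩ := mem_affineSpan_triple hq
  have hpfo' := hpfo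
  rw [hfo] at hpfo'
  obtain ⟨α, β, γ, hα, hβ, hγ, hsum, hpe⟩ := hpfo'
  set v : E3 := q - p with hv
  set mm : ℝ := min (min α β) γ with hmm
  set D : ℝ := max (max |l - α| |m - β|) |n - γ| with hD
  set ε : ℝ := mm / (2 * (D + 1)) with hε
  have hmmpos : 0 < mm := lt_min (lt_min hα hβ) hγ
  have hDpos : 0 ≤ D := le_trans (abs_nonneg (l - α)) (le_trans (le_max_left _ _) (le_max_left _ _))
  have hεpos : 0 < ε := by rw [hε]; positivity
  have hmem : ∀ t : ℝ, |t| ≤ ε → p + t • v ∈ fo := by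
    intro t ht
    rw [hfo]
    refine ⟨α + t * (l - α), β + t * (m - β), γ + t * (n - γ), ?_, ?_, ?_, ?_, ?_⟩
    · exact pos_aux α mm D ε t (l - α) hmmpos (le_trans (min_le_left _ _) (min_le_left _ _))
        (le_trans (le_max_left _ _) (le_max_left _ _)) hε ht
    · exact pos_aux β mm D ε t (m - β) hmmpos (le_trans (min_le_left _ _) (min_le_right _ _))
        (le_trans (le_max_right _ _) (le_max_left _ _)) hε ht
    · exact pos_aux γ mm D ε t (n - γ) hmmpos (min_le_right _ _)
        (le_max_right _ _) hε ht
    · linear_combination (1 - t) * hsum + t * hlmn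
    · rw [hv, hpe, hqe]; module
  set I : ℝ := ⟪x - p, v⟫ with hI
  set C : ℝ := ‖v‖ ^ 2 with hC
  have hCpos : 0 ≤ C := by rw [hC]; positivity
  have hineq : ∀ t : ℝ, |t| ≤ ε → 2 * t * I ≤ t ^ 2 * C := by
    intro t ht
    have hy := hmem t ht
    have h1 : dist x p ≤ dist x (p + t • v) := by
      rw [← hpd]
      exact infDist_le_dist_of_mem (hfo_sub hy)
    have h2 : ‖x - p‖ ^ 2 ≤ ‖x - (p + t • v)‖ ^ 2 := by
      rw [dist_eq_norm, dist_eq_norm] at h1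
      nlinarith [norm_nonneg (x - p), norm_nonneg (x - (p + t • v))]
    have h3 : x - (p + t • v) = (x - p) - t • v := by abel
    rw [h3] at h2
    have hexp : ‖(x - p) - t • v‖ ^ 2 = ‖x - p‖ ^ 2 - 2 * (t * I) + t ^ 2 * C := by
      rw [norm_sub_sq_real, real_inner_smul_right, norm_smul, hI, hC]
      simp only [Real.norm_eq_abs, mul_pow, sq_abs]
    rw [hexp] at h2
    linarith
  have habs : ∀ δ : ℝ, 0 < δ → |I| ≤ δ := by
    intro δ hδ
    set t : ℝ := min ε (δ / (2 * (C + 1))) with htdef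
    have htpos : 0 < t := lt_min hεpos (by positivity)
    have ht1 : |t| ≤ ε := by rw [abs_of_pos htpos]; exact min_le_left _ _
    have ht2 : |(-t)| ≤ ε := by rw [abs_neg, abs_of_pos htpos]; exact min_le_left _ _
    have e1 : 2 * t * I ≤ t ^ 2 * C := hineq t ht1
    have e2 : -(2 * t * I) ≤ t ^ 2 * C := by
      have h := hineq (-t) ht2
      rw [neg_sq] at h
      linarith [h]
    have h3 : 2 * I ≤ t * C := by
      have h : (2 * I) * t ≤ (t * C) * t := by ring_nf; ring_nf at e1; linarith
      exact le_of_mul_le_mul_right h htpos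
    have h4 : -(t * C) ≤ 2 * I := by
      have h : (-(t * C)) * t ≤ (2 * I) * t := by ring_nf; ring_nf at e2; linarith
      exact le_of_mul_le_mul_right h htpos
    have h5 : t * C ≤ δ := by
      have ht3 : t ≤ δ / (2 * (C + 1)) := min_le_right _ _
      have : t * C ≤ δ / (2 * (C + 1)) * C :=
        mul_le_mul_of_nonneg_right ht3 hCpos
      have h6 : δ / (2 * (C + 1)) * C ≤ δ := by
        rw [div_mul_eq_mul_div, div_le_iff₀ (by positivity)]
        nlinarith
      linarith
    rcases abs_cases I with ⟨h, _⟩ | ⟨h, _⟩ <;> rw [h] <;> linarith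
  have : |I| ≤ 0 := by
    refine le_of_forall_pos_le_add ?_
    intro δ hδ
    simpa using habs δ hδ
  have hI0 : I = 0 := abs_eq_zero.mp (le_antisymm this (abs_nonneg _))
  exact hI0
end

section
/- Let V be a finite set of points in ℝ³, and for v ∈ V let Cell(v) = {x : ∀ u ∈ V, dist(x,v) ≤ dist(x,u)}. Let S ⊆ ℝ³ be a path-connected set, and define the 'touched' set T = {v ∈ V : Cell(v) ∩ S ≠ ∅}. Then for any v, w ∈ T there is a path γ : [0,1] → S from a point of Cell(v) ∩ S to a point of Cell(w) ∩ S, and the set of cells met by γ forms a chain u₀ = v, …, u_m = w with γ meeting Cell(u_i) for each i and consecutive cells intersecting along γ, i.e., there is a point of γ lying in both Cell(u_i) and Cell(u_{i+1}). -/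
open Metric

/-- Key lemma behind Theorem 7 (correctness of flooding): in a path-connected
set `S`, any two vertices whose Voronoi cells meet `S` are joined by a path in
`S` along which the met Voronoi cells form a chain with consecutive cells
sharing a point of the path. -/
theorem stmt9 (V : Finset E3)
    (Cell : E3 → Set E3)
    (hCell : ∀ v : E3, Cell v = {x : E3 | ∀ u ∈ V, dist x v ≤ dist x u})
    (S : Set E3) (hS : IsPathConnected S)
    (v w : E3) (hvV : v ∈ V) (hwV : w ∈ V)
    (hv : (Cell v ∩ S).Nonempty) (hw : (Cell w ∩ S).Nonempty) :
    ∃ γ : ℝ → E3, ContinuousOn γ (Set.Icc 0 1) ∧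
      γ '' Set.Icc 0 1 ⊆ S ∧
      γ 0 ∈ Cell v ∩ S ∧ γ 1 ∈ Cell w ∩ S ∧
      ∃ (m : ℕ) (u : Fin (m + 1) → E3),
        u 0 = v ∧ u (Fin.last m) = w ∧
        (∀ i, u i ∈ V) ∧
        (∀ i, ∃ t ∈ Set.Icc (0 : ℝ) 1, γ t ∈ Cell (u i)) ∧
        (∀ i : Fin m, ∃ t ∈ Set.Icc (0 : ℝ) 1,
          γ t ∈ Cell (u i.castSucc) ∩ Cell (u i.succ)) := by
  classical
  obtain ⟨a, hav, haS⟩ := hv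
  obtain ⟨b, hbw, hbS⟩ := hw
  obtain ⟨p, hp⟩ := hS.joinedIn a haS b hbS
  set γ : ℝ → E3 := ⇑p.extend with hγdef
  have hγcont : Continuous γ := p.continuous_extend
  have hγS : γ '' Set.Icc 0 1 ⊆ S := by
    rintro _ ⟨t, ht, rfl⟩
    rw [hγdef, Path.extend_apply p ht]
    exact hp _
  have hγ0 : γ 0 = a := p.extend_zero
  have hγ1 : γ 1 = b := p.extend_one
  -- cells are closed
  have hclosed : ∀ u : E3, IsClosed (Cell u) := by
    intro u
    rw [hCell]
    have : {x : E3 | ∀ u' ∈ V, dist x u ≤ dist x u'} =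
        ⋂ u' ∈ V, {x : E3 | dist x u ≤ dist x u'} := by
      ext x; simp
    rw [this]
    exact isClosed_biInter fun u' _ =>
      isClosed_le (Continuous.dist continuous_id continuous_const)
        (Continuous.dist continuous_id continuous_const)
  -- cells cover
  have hcover : ∀ x : E3, ∃ u ∈ V, x ∈ Cell u := by
    intro x
    obtain ⟨u, huV, hmin⟩ := V.exists_min_image (fun u => dist x u) ⟨v, hvV⟩
    exact ⟨u, huV, by rw [hCell]; exact fun u' hu' => hmin u' hu'⟩
  -- adjacency and reachability
  set R : E3 → E3 → Prop := fun u u' => u ∈ V ∧ u' ∈ V ∧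
      ∃ t ∈ Set.Icc (0:ℝ) 1, γ t ∈ Cell u ∩ Cell u' with hRdef
  set Reach : E3 → Prop := fun u => Relation.ReflTransGen R v u with hReach
  -- the two closed pieces
  set A : Set ℝ := ⋃ u ∈ ((V : Set E3) ∩ {u | Reach u}),
      (Set.Icc (0:ℝ) 1 ∩ γ ⁻¹' Cell u) with hAdef
  set B : Set ℝ := ⋃ u ∈ ((V : Set E3) ∩ {u | ¬ Reach u}),
      (Set.Icc (0:ℝ) 1 ∩ γ ⁻¹' Cell u) with hBdef
  have hAclosed : IsClosed A :=
    Set.Finite.isClosed_biUnion (V.finite_toSet.inter_of_left _)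
      (fun u _ => isClosed_Icc.inter ((hclosed u).preimage hγcont))
  have hBclosed : IsClosed B :=
    Set.Finite.isClosed_biUnion (V.finite_toSet.inter_of_left _)
      (fun u _ => isClosed_Icc.inter ((hclosed u).preimage hγcont))
  have hcov : Set.Icc (0:ℝ) 1 ⊆ A ∪ B := by
    intro t ht
    obtain ⟨u, huV, hu⟩ := hcover (γ t)
    by_cases hr : Reach u
    · exact Or.inl (Set.mem_biUnion ⟨huV, hr⟩ ⟨ht, hu⟩)
    · exact Or.inr (Set.mem_biUnion ⟨huV, hr⟩ ⟨ht, hu⟩)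
  have hdisj : ∀ t, t ∈ A → t ∈ B → False := by
    intro t htA htB
    obtain ⟨u, ⟨huV, hur⟩, ht1, hu⟩ := Set.mem_iUnion₂.mp htA
    obtain ⟨u', ⟨hu'V, hu'r⟩, ht1', hu'⟩ := Set.mem_iUnion₂.mp htB
    exact hu'r (hur.tail ⟨huV, hu'V, t, ht1, hu, hu'⟩)
  have h0A : (0:ℝ) ∈ A := by
    refine Set.mem_biUnion ⟨hvV, Relation.ReflTransGen.refl⟩ ?_
    exact ⟨Set.left_mem_Icc.mpr zero_le_one, by rw [Set.mem_preimage, hγ0]; exact hav⟩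
  have h1A : (1:ℝ) ∈ A := by
    rcases hcov (Set.right_mem_Icc.mpr zero_le_one) with h | h
    · exact h
    · exfalso
      obtain ⟨t, htIcc, htA, htB⟩ :=
        (isPreconnected_closed_iff.mp isPreconnected_Icc) A B hAclosed hBclosed hcov
          ⟨0, Set.left_mem_Icc.mpr zero_le_one, h0A⟩
          ⟨1, Set.right_mem_Icc.mpr zero_le_one, h⟩
      exact hdisj t htA htB
  -- w is reachable
  have hwr : Reach w := by
    obtain ⟨u, ⟨huV, hur⟩, ht1, hu⟩ := Set.mem_iUnion₂.mp h1A
    refine hur.tail ⟨huV, hwV, 1, Set.right_mem_Icc.mpr zero_le_one, hu, ?_⟩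
    rw [hγ1]; exact hbw
  -- reachability gives a chain
  have chain : ∀ u, Relation.ReflTransGen R v u →
      ∃ (m : ℕ) (c : Fin (m+1) → E3), c 0 = v ∧ c (Fin.last m) = u ∧
        (∀ i, c i ∈ V) ∧
        (∀ i, ∃ t ∈ Set.Icc (0:ℝ) 1, γ t ∈ Cell (c i)) ∧
        (∀ i : Fin m, ∃ t ∈ Set.Icc (0:ℝ) 1,
          γ t ∈ Cell (c i.castSucc) ∩ Cell (c i.succ)) := by
    intro u hu
    induction hu with
    | refl =>
        refine ⟨0, fun _ => v, rfl, rfl, fun _ => hvV, fun _ => ⟨0,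
          Set.left_mem_Icc.mpr zero_le_one, by rw [hγ0]; exact hav⟩, fun i => i.elim0⟩
    | @tail x y hx hxy ih =>
        obtain ⟨m, c, h0, hlast, hVm, hmeet, hcons⟩ := ih
        obtain ⟨hxV, hyV, t0, ht0, htmem⟩ := hxy
        refine ⟨m + 1, Fin.snoc c y, ?_, ?_, ?_, ?_, ?_⟩
        · rw [show (0 : Fin (m+2)) = Fin.castSucc 0 from rfl, Fin.snoc_castSucc]
          exact h0
        · rw [Fin.snoc_last]
        · intro i
          refine Fin.lastCases ?_ ?_ i
          · rw [Fin.snoc_last]; exact hyV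
          · intro j; rw [Fin.snoc_castSucc]; exact hVm j
        · intro i
          refine Fin.lastCases ?_ ?_ i
          · rw [Fin.snoc_last]; exact ⟨t0, ht0, htmem.2⟩
          · intro j; rw [Fin.snoc_castSucc]; exact hmeet j
        · intro i
          refine Fin.lastCases ?_ ?_ i
          · refine ⟨t0, ht0, ?_⟩
            rw [Fin.succ_last, Fin.snoc_last, Fin.snoc_castSucc, hlast]
            exact htmem
          · intro j
            obtain ⟨t, ht, hmem⟩ := hcons j
            refine ⟨t, ht, ?_⟩
            rw [Fin.succ_castSucc, Fin.snoc_castSucc, Fin.snoc_castSucc]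
            exact hmem
  obtain ⟨m, c, h0, hlast, hVm, hmeet, hcons⟩ := chain w hwr
  exact ⟨γ, hγcont.continuousOn, hγS, ⟨by rw [hγ0]; exact hav, by rw [hγ0]; exact haS⟩,
    ⟨by rw [hγ1]; exact hbw, by rw [hγ1]; exact hbS⟩,
    m, c, h0, hlast, hVm, hmeet, hcons⟩
end
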